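/- Let (S^ρ)_{ρ∈(0,1)} be a C¹-regularized single layer kernel and let F : Ω → ℝ be continuous. Then lim_{ρ→0+} sup_{ξ∈Ω} |∫_Ω S^ρ(ξ·η)F(η) dω(η) − ∫_Ω S(ξ·η)F(η) dω(η)| = 0. -/

import Mathlib

open MeasureTheory Filter Real Set RealInnerProductSpace

noncomputable section

abbrev E3 : Type := EuclideanSpace ℝ (Fin 3)

/-- Legendre polynomial of degree `n` (Rodrigues' formula, normalized by `legendreP n 1 = 1`). -/
noncomputable def legendreP (n : ℕ) (t : ℝ) : ℝ :=
  (1 / (2 ^ n * n.factorial)) * iteratedDeriv n (fun x : ℝ => (x ^ 2 - 1) ^ n) t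

/-- The unit sphere Ω ⊂ ℝ³. -/
def sph : Set E3 := Metric.sphere 0 1

/-- The standard surface measure dω on the unit sphere (total mass 4π), as a measure on ℝ³. -/
noncomputable def σS : Measure E3 :=
  Measure.map Subtype.val ((volume : Measure E3).toSphere)

/-- Normalization x ↦ x/|x|. -/
noncomputable def nrm (x : E3) : E3 := ‖x‖⁻¹ • x

/-- 0-homogeneous extension F̄ of a scalar field on the sphere. -/
noncomputable def homog (F : E3 → ℝ) : E3 → ℝ := fun x => F (nrm x)

/-- 0-homogeneous extension f̄ of a vector field on the sphere. -/
noncomputable def homogV (f : E3 → E3) : E3 → E3 := fun x => f (nrm x)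

/-- `F` is of class C^k(Ω): its 0-homogeneous extension is k-times continuously
differentiable on ℝ³ ∖ {0}. -/
def IsCk (k : ℕ∞) (F : E3 → ℝ) : Prop := ContDiffOn ℝ k (homog F) {x : E3 | x ≠ 0}

/-- `f` is of class c^k(Ω) (componentwise C^k(Ω)). -/
def IsCkV (k : ℕ∞) (f : E3 → E3) : Prop := ContDiffOn ℝ k (homogV f) {x : E3 | x ≠ 0}

/-- Surface gradient ∇*F(ξ) = ∇F̄(ξ). -/
noncomputable def surfGrad (F : E3 → ℝ) (ξ : E3) : E3 := gradient (homog F) ξ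

/-- Cross product on ℝ³. -/
noncomputable def cross3 (x y : E3) : E3 :=
  (WithLp.equiv 2 (Fin 3 → ℝ)).symm
    ![x 1 * y 2 - x 2 * y 1, x 2 * y 0 - x 0 * y 2, x 0 * y 1 - x 1 * y 0]

/-- Surface curl gradient L*F(ξ) = ξ × ∇F̄(ξ). -/
noncomputable def surfCurl (F : E3 → ℝ) (ξ : E3) : E3 := cross3 ξ (surfGrad F ξ)

/-- Euclidean Laplacian (sum of second partial derivatives). -/
noncomputable def lap (f : E3 → ℝ) (x : E3) : ℝ :=
  ∑ i : Fin 3,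
    fderiv ℝ (fun y => fderiv ℝ f y (EuclideanSpace.single i 1)) x (EuclideanSpace.single i 1)

/-- Beltrami operator Δ*F(ξ) = ΔF̄(ξ). -/
noncomputable def beltrami (F : E3 → ℝ) (ξ : E3) : ℝ := lap (homog F) ξ

/-- Green's function for the Beltrami operator, as a zonal kernel. -/
noncomputable def GreenG (t : ℝ) : ℝ :=
  (1 / (4 * π)) * Real.log (1 - t) + (1 / (4 * π)) * (1 - Real.log 2)

/-- The single layer kernel S. -/
noncomputable def singleS (t : ℝ) : ℝ := 1 / (Real.sqrt 2 * Real.sqrt (1 - t))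

/-- Closed form of the single layer operator applied to Green's function, D⁻¹G(Δ*;·). -/
noncomputable def gDG (t : ℝ) : ℝ :=
  (1 / (2 * π)) * Real.log ((1 + t) * (1 / 2 - 1 / (1 - 2 * singleS t))) - 1 / (2 * π)

/-- A C¹-regularized single layer kernel: non-negative regularization functions `R ρ`,
ρ ∈ (0,1), of class C¹ on [−1,1], matching `singleS` up to first order at 1−ρ, with
lim_{ρ→0+} ∫_{1−ρ}^1 |R^ρ| dt = 0 and lim_{ρ→0+} ρ·∫_{1−ρ}^1 |(R^ρ)'| dt = 0. -/
structure RegSingleC1 where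
  R : ℝ → ℝ → ℝ
  nonneg : ∀ ρ ∈ Set.Ioo (0 : ℝ) 1, ∀ t ∈ Set.Icc (-1 : ℝ) 1, 0 ≤ R ρ t
  smooth : ∀ ρ ∈ Set.Ioo (0 : ℝ) 1, ContDiffOn ℝ 1 (R ρ) (Set.Icc (-1) 1)
  match0 : ∀ ρ ∈ Set.Ioo (0 : ℝ) 1, R ρ (1 - ρ) = singleS (1 - ρ)
  match1 : ∀ ρ ∈ Set.Ioo (0 : ℝ) 1, deriv (R ρ) (1 - ρ) = deriv singleS (1 - ρ)
  lim0 : Filter.Tendsto (fun ρ => ∫ t in (1 - ρ)..1, |R ρ t|)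
    (nhdsWithin 0 (Set.Ioi 0)) (nhds 0)
  lim1 : Filter.Tendsto (fun ρ => ρ * ∫ t in (1 - ρ)..1, |deriv (R ρ) t|)
    (nhdsWithin 0 (Set.Ioi 0)) (nhds 0)

/-- The regularized single layer kernel S^ρ. -/
noncomputable def SregK (Rs : RegSingleC1) (ρ : ℝ) (t : ℝ) : ℝ :=
  if t ≤ 1 - ρ then singleS t else Rs.R ρ t

open scoped ENNReal Pointwise Topology

/-! Archimedes' hat-box theorem: for a unit vector `ξ`, the image of `dω` under `η ↦ ξ·η` is
`2π dt` on `(b, 1]` for every `b > 0`. Since `S^ρ − S` vanishes below `1 − ρ`, for every `ξ ∈ Ω`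
`|∫ (S^ρ − S)(ξ·η) F(η) dω(η)| ≤ 2π ‖F‖_∞ ∫_{1−ρ}^1 (|R^ρ| + S) dt
  = 2π ‖F‖_∞ (∫_{1−ρ}^1 |R^ρ| dt + √(2ρ))`,
a bound independent of `ξ` that tends to `0`. -/

lemma measurable_singleS : Measurable singleS := by
  unfold singleS; fun_prop

lemma singleS_nonneg (t : ℝ) : 0 ≤ singleS t := by
  unfold singleS; positivity

lemma singleS_le_one {t : ℝ} (ht : t ≤ 1 / 2) : singleS t ≤ 1 := by
  rw [singleS, ← Real.sqrt_mul zero_le_two]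
  exact div_le_one_of_le₀ (Real.one_le_sqrt.mpr (by linarith)) (Real.sqrt_nonneg _)

lemma singleS_eq_rpow {t : ℝ} (ht : t ≤ 1) :
    singleS t = (√2)⁻¹ * (1 - t) ^ (-(1 / 2) : ℝ) := by
  rw [singleS, Real.rpow_neg (by linarith), ← Real.sqrt_eq_rpow, one_div, mul_inv]

lemma lintegral_singleS_Ioc {δ : ℝ} (hδ : 0 ≤ δ) :
    ∫⁻ t in Ioc (1 - δ) 1, ENNReal.ofReal (singleS t) = ENNReal.ofReal (√2 * √δ) := by
  set g : ℝ → ℝ := fun u => (√2)⁻¹ * u ^ (-(1 / 2) : ℝ)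
  have hS : EqOn singleS (fun t => g (1 - t)) (Ioc (1 - δ) 1) :=
    fun t ht => singleS_eq_rpow ht.2
  have hg : IntervalIntegrable g volume 0 δ :=
    (intervalIntegral.intervalIntegrable_rpow' (by norm_num)).const_mul _
  have hint : IntegrableOn singleS (Ioc (1 - δ) 1) := by
    have h := (hg.comp_sub_left 1).symm
    rw [sub_zero, intervalIntegrable_iff_integrableOn_Ioc_of_le (by linarith)] at h
    exact h.congr_fun hS.symm measurableSet_Ioc
  have hval : ∫ t in Ioc (1 - δ) 1, singleS t = √2 * √δ := by
    rw [setIntegral_congr_fun measurableSet_Ioc hS,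
      ← intervalIntegral.integral_of_le (by linarith), intervalIntegral.integral_comp_sub_left g,
      sub_self, sub_sub_cancel, intervalIntegral.integral_const_mul,
      integral_rpow (Or.inl (by norm_num)), Real.zero_rpow (by norm_num),
      show (-(1 / 2) + 1 : ℝ) = 1 / 2 by norm_num, ← Real.sqrt_eq_rpow]
    field_simp
    rw [Real.sq_sqrt zero_le_two, sub_zero, mul_comm]
  rw [← ofReal_integral_eq_lintegral_ofReal hint (ae_of_all _ singleS_nonneg), hval]

lemma volume_disk {r : ℝ} (hr : 0 ≤ r) :
    volume {w : Fin 2 → ℝ | w 0 ^ 2 + w 1 ^ 2 < r} = ENNReal.ofReal (π * r) := by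
  have hpre : (MeasurableEquiv.toLp 2 (Fin 2 → ℝ)).symm ⁻¹' {w | w 0 ^ 2 + w 1 ^ 2 < r}
      = Metric.ball (0 : EuclideanSpace ℝ (Fin 2)) √r := by
    ext x
    simp [EuclideanSpace.norm_eq, Fin.sum_univ_two,
      Real.sqrt_lt_sqrt_iff (by positivity : 0 ≤ x 0 ^ 2 + x 1 ^ 2)]
  have hmeas : MeasurableSet {w : Fin 2 → ℝ | w 0 ^ 2 + w 1 ^ 2 < r} :=
    measurableSet_lt (by fun_prop) measurable_const
  rw [← (EuclideanSpace.volume_preserving_symm_measurableEquiv_toLp (Fin 2)).measure_preimage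
    hmeas.nullMeasurableSet, hpre, EuclideanSpace.volume_ball_fin_two,
    ← ENNReal.ofReal_pow (Real.sqrt_nonneg _), Real.sq_sqrt hr, ← ENNReal.ofReal_mul hr, mul_comm]

lemma mul_sqrt_sq_add_lt_iff {a z s : ℝ} (ha : 0 < a) (hz : 0 < z) :
    a * √(z ^ 2 + s) < z ↔ s < (1 - a ^ 2) / a ^ 2 * z ^ 2 := by
  rw [show a * √(z ^ 2 + s) = √(a ^ 2 * (z ^ 2 + s)) by
      rw [Real.sqrt_mul (sq_nonneg a), Real.sqrt_sq ha.le], Real.sqrt_lt' hz, div_mul_eq_mul_div,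
    lt_div_iff₀ (by positivity)]
  constructor <;> intro h <;> nlinarith

lemma integral_min_one_sub_sq {a : ℝ} (ha : a ∈ Ioo (0 : ℝ) 1) :
    ∫ z in (0 : ℝ)..1, min (1 - z ^ 2) ((1 - a ^ 2) / a ^ 2 * z ^ 2) = 2 / 3 * (1 - a) := by
  obtain ⟨ha0, ha1⟩ := ha
  set c := (1 - a ^ 2) / a ^ 2
  have hc : c * a ^ 2 = 1 - a ^ 2 := div_mul_cancel₀ _ (by positivity)
  have hc0 : 0 ≤ c := div_nonneg (by nlinarith) (by positivity)
  have hcont : Continuous fun z : ℝ => min (1 - z ^ 2) (c * z ^ 2) := by fun_prop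
  have hlow : ∫ z in (0 : ℝ)..a, min (1 - z ^ 2) (c * z ^ 2) = c * (a ^ 3 / 3) := by
    rw [intervalIntegral.integral_congr (g := fun z => c * z ^ 2) fun z hz => ?_,
      intervalIntegral.integral_const_mul, integral_pow]
    · norm_num
    rw [uIcc_of_le ha0.le] at hz
    have : z ^ 2 ≤ a ^ 2 := pow_le_pow_left₀ hz.1 hz.2 2
    exact min_eq_right (by nlinarith)
  have hhigh : ∫ z in a..(1 : ℝ), min (1 - z ^ 2) (c * z ^ 2) = (1 - a) - (1 - a ^ 3) / 3 := by
    rw [intervalIntegral.integral_congr (g := fun z => 1 - z ^ 2) fun z hz => ?_,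
      intervalIntegral.integral_sub intervalIntegrable_const
      ((continuous_pow 2).intervalIntegrable _ _), integral_pow]
    · norm_num
    rw [uIcc_of_le ha1.le] at hz
    have : a ^ 2 ≤ z ^ 2 := pow_le_pow_left₀ ha0.le hz.1 2
    exact min_eq_left (by nlinarith)
  rw [← intervalIntegral.integral_add_adjacent_intervals (hcont.intervalIntegrable 0 a)
    (hcont.intervalIntegrable a 1), hlow, hhigh]
  linear_combination a / 3 * hc

/-- At height `z`, the ball has squared radius `1 - z²` and the cone `a ‖y‖ < y₀` has squared
radius `(1 - a²) / a² · z²`. -/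
lemma volume_cone_slice {a : ℝ} (ha : a ∈ Ioo (0 : ℝ) 1) (z : ℝ) :
    volume {w : Fin 2 → ℝ | z ^ 2 + w 0 ^ 2 + w 1 ^ 2 < 1 ∧ a * √(z ^ 2 + w 0 ^ 2 + w 1 ^ 2) < z}
      = (Ioo 0 1).indicator
          (fun z => ENNReal.ofReal (π * min (1 - z ^ 2) ((1 - a ^ 2) / a ^ 2 * z ^ 2))) z := by
  by_cases hz : z ∈ Ioo (0 : ℝ) 1
  · have hslice : {w : Fin 2 → ℝ | z ^ 2 + w 0 ^ 2 + w 1 ^ 2 < 1 ∧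
          a * √(z ^ 2 + w 0 ^ 2 + w 1 ^ 2) < z}
        = {w | w 0 ^ 2 + w 1 ^ 2 < min (1 - z ^ 2) ((1 - a ^ 2) / a ^ 2 * z ^ 2)} := by
      ext w
      simp only [mem_ofPred_eq, lt_min_iff, add_assoc, mul_sqrt_sq_add_lt_iff ha.1 hz.1]
      exact and_congr (by constructor <;> intro <;> linarith) Iff.rfl
    have hc : 0 ≤ (1 - a ^ 2) / a ^ 2 := div_nonneg (by nlinarith [ha.1, ha.2]) (sq_nonneg a)
    rw [indicator_of_mem hz, hslice,
      volume_disk (le_min (by nlinarith [hz.1, hz.2]) (by positivity))]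
  · rw [indicator_of_notMem hz]
    refine measure_mono_null (fun w ⟨h1, h2⟩ => (hz ⟨?_, ?_⟩).elim) measure_empty
    · exact lt_of_le_of_lt (by have := ha.1; positivity) h2
    · nlinarith [sq_nonneg (w 0), sq_nonneg (w 1)]

lemma volume_cone {a : ℝ} (ha : a ∈ Ioo (0 : ℝ) 1) :
    volume {y : E3 | ‖y‖ < 1 ∧ a * ‖y‖ < y 0} = ENNReal.ofReal (2 * π / 3 * (1 - a)) := by
  let e := (MeasurableEquiv.toLp 2 (Fin 3 → ℝ)).symm.trans
    (MeasurableEquiv.piFinSuccAbove (fun _ : Fin 3 => ℝ) 0)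
  have he : MeasurePreserving e volume (volume.prod volume) :=
    (measurePreserving_piFinSuccAbove (fun _ => volume) 0).comp
      (EuclideanSpace.volume_preserving_symm_measurableEquiv_toLp _)
  set S := {p : ℝ × (Fin 2 → ℝ) | p.1 ^ 2 + p.2 0 ^ 2 + p.2 1 ^ 2 < 1 ∧
    a * √(p.1 ^ 2 + p.2 0 ^ 2 + p.2 1 ^ 2) < p.1}
  have hS : MeasurableSet S := by
    have hq : Continuous fun p : ℝ × (Fin 2 → ℝ) => p.1 ^ 2 + p.2 0 ^ 2 + p.2 1 ^ 2 := by
      fun_prop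
    exact ((isOpen_lt hq continuous_const).inter
      (isOpen_lt (continuous_const.mul hq.sqrt) continuous_fst)).measurableSet
  have hpre : {y : E3 | ‖y‖ < 1 ∧ a * ‖y‖ < y 0} = e ⁻¹' S := by
    ext y
    simp [e, S, EuclideanSpace.norm_eq, Fin.sum_univ_three, Real.sqrt_lt' one_pos, Fin.tail]
  set h : ℝ → ℝ := fun z => π * min (1 - z ^ 2) ((1 - a ^ 2) / a ^ 2 * z ^ 2)
  have hint : IntegrableOn h (Ioo 0 1) :=
    (Continuous.integrableOn_Icc (by fun_prop)).mono_set Ioo_subset_Icc_self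
  have hnonneg : ∀ z ∈ Ioo (0 : ℝ) 1, 0 ≤ h z := fun z hz => by
    have : 0 ≤ (1 - a ^ 2) / a ^ 2 := div_nonneg (by nlinarith [ha.1, ha.2]) (sq_nonneg a)
    have := le_min (by nlinarith [hz.1, hz.2] : (0 : ℝ) ≤ 1 - z ^ 2)
      (by positivity : 0 ≤ (1 - a ^ 2) / a ^ 2 * z ^ 2)
    positivity
  rw [hpre, he.measure_preimage hS.nullMeasurableSet, Measure.prod_apply hS,
    show (fun z => volume (Prod.mk z ⁻¹' S)) = _ from funext (volume_cone_slice ha),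
    lintegral_indicator measurableSet_Ioo, ← ofReal_integral_eq_lintegral_ofReal hint
      ((ae_restrict_iff' measurableSet_Ioo).2 (ae_of_all _ hnonneg)),
    ← integral_Ioc_eq_integral_Ioo, ← intervalIntegral.integral_of_le zero_le_one,
    intervalIntegral.integral_const_mul, integral_min_one_sub_sq ha]
  ring_nf

lemma Ioo_smul_sphere_inter_setOf_lt_inner {E : Type*} [NormedAddCommGroup E]
    [InnerProductSpace ℝ E] (ξ : E) (a : ℝ) :
    Ioo (0 : ℝ) 1 • (Metric.sphere (0 : E) 1 ∩ {η | a < ⟪ξ, η⟫})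
      = {x | ‖x‖ < 1 ∧ a * ‖x‖ < ⟪ξ, x⟫} := by
  ext x
  rw [Set.mem_smul]
  constructor
  · rintro ⟨r, ⟨hr0, hr1⟩, y, ⟨hy, hay⟩, rfl⟩
    rw [mem_sphere_zero_iff_norm] at hy
    have hry : ‖r • y‖ = r := by rw [norm_smul, hy, Real.norm_of_nonneg hr0.le, mul_one]
    refine ⟨hry.symm ▸ hr1, ?_⟩
    rw [hry, real_inner_smul_right, mul_comm]
    exact mul_lt_mul_of_pos_left hay hr0
  · rintro ⟨hx1, hax⟩
    have hx : 0 < ‖x‖ := norm_pos_iff.mpr fun h => by simp [h] at hax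
    refine ⟨‖x‖, ⟨hx, hx1⟩, ‖x‖⁻¹ • x, ⟨?_, ?_⟩, ?_⟩
    · rw [mem_sphere_zero_iff_norm, norm_smul, norm_inv, norm_norm, inv_mul_cancel₀ hx.ne']
    · rw [mem_ofPred_eq, real_inner_smul_right, lt_inv_mul_iff₀ hx, mul_comm]
      exact hax
    · rw [smul_smul, mul_inv_cancel₀ hx.ne', one_smul]

lemma exists_linearIsometryEquiv_inner_apply_eq {n : ℕ} (i : Fin n)
    {ξ : EuclideanSpace ℝ (Fin n)} (hξ : ‖ξ‖ = 1) :
    ∃ T : EuclideanSpace ℝ (Fin n) ≃ₗᵢ[ℝ] EuclideanSpace ℝ (Fin n), ∀ y, ⟪ξ, T y⟫ = y i := by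
  have horth : Orthonormal ℝ (({i} : Set (Fin n)).domRestrict fun _ => ξ) :=
    ⟨fun _ => hξ, fun j k hjk => (hjk (Subtype.ext (j.2.trans k.2.symm))).elim⟩
  obtain ⟨b, hb⟩ := horth.exists_orthonormalBasis_extension_of_card_eq (by simp)
  refine ⟨b.repr.symm, fun y => ?_⟩
  rw [← hb i rfl, ← b.repr_symm_single, LinearIsometryEquiv.inner_map_map,
    EuclideanSpace.inner_single_left]
  simp

/-- `Measure.toSphere` measures a cap by three times the volume of the cone over it; a rotation
taking `ξ` to the first basis vector reduces that cone to `volume_cone`. -/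
lemma σS_setOf_lt_inner {ξ : E3} (hξ : ‖ξ‖ = 1) {a : ℝ} (ha : 0 < a) :
    σS {η | a < ⟪ξ, η⟫} = ENNReal.ofReal (2 * π * (1 - a)) := by
  have hA : MeasurableSet {η : E3 | a < ⟪ξ, η⟫} :=
    measurableSet_lt measurable_const (by fun_prop)
  rw [σS, Measure.map_apply measurable_subtype_coe hA,
    Measure.toSphere_apply' _ (measurable_subtype_coe hA), Subtype.image_preimage_coe,
    Ioo_smul_sphere_inter_setOf_lt_inner, finrank_euclideanSpace_fin]
  rcases lt_or_ge a 1 with ha1 | ha1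
  · obtain ⟨T, hT⟩ := exists_linearIsometryEquiv_inner_apply_eq 0 hξ
    have hC : MeasurableSet {x : E3 | ‖x‖ < 1 ∧ a * ‖x‖ < ⟪ξ, x⟫} :=
      ((isOpen_lt continuous_norm continuous_const).inter
        (isOpen_lt (continuous_const.mul continuous_norm)
          (continuous_const.inner continuous_id))).measurableSet
    have hcone : T ⁻¹' {x | ‖x‖ < 1 ∧ a * ‖x‖ < ⟪ξ, x⟫} = {y | ‖y‖ < 1 ∧ a * ‖y‖ < y 0} := by
      ext y
      simp [hT]
    rw [← T.measurePreserving.measure_preimage hC.nullMeasurableSet, hcone,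
      volume_cone ⟨ha, ha1⟩, show ((3 : ℕ) : ℝ≥0∞) = ENNReal.ofReal 3 by norm_num,
      ← ENNReal.ofReal_mul zero_le_three]
    ring_nf
  · have hempty : {x : E3 | ‖x‖ < 1 ∧ a * ‖x‖ < ⟪ξ, x⟫} = ∅ := by
      refine eq_empty_of_forall_notMem fun x ⟨_, hx⟩ => ?_
      have := real_inner_le_norm ξ x
      rw [hξ, one_mul] at this
      nlinarith [norm_nonneg x]
    rw [hempty, measure_empty, mul_zero, ENNReal.ofReal_of_nonpos (by nlinarith [Real.pi_pos])]

instance : IsFiniteMeasure σS := by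
  unfold σS; infer_instance

lemma ae_mem_sph : ∀ᵐ η ∂σS, η ∈ sph :=
  (ae_map_iff measurable_subtype_coe.aemeasurable Metric.isClosed_sphere.measurableSet).2
    (ae_of_all _ fun η => η.2)

lemma map_inner_σS_restrict_Ioi {ξ : E3} (hξ : ‖ξ‖ = 1) {b : ℝ} (hb : 0 < b) :
    (σS.map fun η => ⟪ξ, η⟫).restrict (Ioi b)
      = ENNReal.ofReal (2 * π) • volume.restrict (Ioc b 1) := by
  have hIoi : ∀ c, b ≤ c →
      σS.map (fun η => ⟪ξ, η⟫) (Ioi c) = ENNReal.ofReal (2 * π) * volume (Ioc c 1) :=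
    fun c hc => by
      rw [Measure.map_apply (by fun_prop) measurableSet_Ioi,
        show (fun η => ⟪ξ, η⟫) ⁻¹' Ioi c = {η : E3 | c < ⟪ξ, η⟫} from rfl,
        σS_setOf_lt_inner hξ (hb.trans_le hc), Real.volume_Ioc,
        ← ENNReal.ofReal_mul (by positivity)]
  refine ext_of_generate_finite _ (BorelSpace.measurable_eq.trans (borel_eq_generateFrom_Ioi ℝ))
    isPiSystem_Ioi ?_ ?_
  · rintro _ ⟨x, rfl⟩
    rw [Measure.restrict_apply measurableSet_Ioi, Measure.smul_apply, smul_eq_mul,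
      Measure.restrict_apply measurableSet_Ioi, Ioi_inter_Ioi, inter_comm, Ioc_inter_Ioi,
      max_comm]
    exact hIoi _ (le_max_left b x)
  · rw [Measure.restrict_apply_univ, Measure.smul_apply, smul_eq_mul, Measure.restrict_apply_univ]
    exact hIoi b le_rfl

lemma lintegral_comp_inner_σS {ξ : E3} (hξ : ‖ξ‖ = 1) {b : ℝ} (hb : 0 < b) {f : ℝ → ℝ≥0∞}
    (hf : AEMeasurable f (volume.restrict (Ioc b 1))) (hf0 : ∀ t ≤ b, f t = 0) :
    ∫⁻ η, f ⟪ξ, η⟫ ∂σS = ENNReal.ofReal (2 * π) * ∫⁻ t in Ioc b 1, f t := by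
  have hsupp : Function.support f ⊆ Ioi b := fun t ht => not_le.mp fun h => ht (hf0 t h)
  have hfν : AEMeasurable f (σS.map fun η => ⟪ξ, η⟫) := by
    rw [← indicator_eq_self.mpr hsupp, aemeasurable_indicator_iff measurableSet_Ioi,
      map_inner_σS_restrict_Ioi hξ hb]
    exact hf.smul_measure _
  rw [← lintegral_map' hfν (by fun_prop), ← setLIntegral_eq_of_support_subset hsupp,
    map_inner_σS_restrict_Ioi hξ hb, lintegral_smul_measure, smul_eq_mul]

lemma inner_mem_Icc_of_mem_sph {ξ η : E3} (hξ : ‖ξ‖ = 1) (hη : η ∈ sph) :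
    ⟪ξ, η⟫ ∈ Icc (-1 : ℝ) 1 := by
  have h := abs_real_inner_le_norm ξ η
  rw [hξ, mem_sphere_zero_iff_norm.mp hη, one_mul] at h
  exact abs_le.mp h

lemma integrable_σS_of_continuousOn {g : E3 → ℝ} (hg : ContinuousOn g sph) :
    Integrable g σS := by
  unfold sph at hg
  rw [σS, (MeasurableEmbedding.subtype_coe Metric.isClosed_sphere.measurableSet).integrable_map_iff]
  exact hg.domRestrict.integrable_of_hasCompactSupport (.of_compactSpace _)

lemma lintegral_singleS_inner_lt_top {ξ : E3} (hξ : ‖ξ‖ = 1) :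
    ∫⁻ η, ENNReal.ofReal (singleS ⟪ξ, η⟫) ∂σS < ⊤ := by
  set g : ℝ → ℝ≥0∞ := (Ioi (1 / 2 : ℝ)).indicator fun t => ENNReal.ofReal (singleS t)
  have hle : ∀ t, ENNReal.ofReal (singleS t) ≤ 1 + g t := fun t => by
    by_cases ht : t ∈ Ioi (1 / 2 : ℝ)
    · simp only [g, indicator_of_mem ht]
      exact le_add_self
    · rw [← ENNReal.ofReal_one]
      exact (ENNReal.ofReal_le_ofReal (singleS_le_one (not_lt.mp ht))).trans le_self_add
  have hg : ∫⁻ η, g ⟪ξ, η⟫ ∂σS < ⊤ := by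
    rw [lintegral_comp_inner_σS hξ one_half_pos
      ((measurable_singleS.ennreal_ofReal.indicator measurableSet_Ioi).aemeasurable)
      fun t ht => indicator_of_notMem (not_lt.mpr ht) _]
    refine ENNReal.mul_lt_top ENNReal.ofReal_lt_top
      ((lintegral_mono (indicator_le_self _ _)).trans_lt ?_)
    rw [show (1 / 2 : ℝ) = 1 - 1 / 2 by norm_num, lintegral_singleS_Ioc (by norm_num)]
    exact ENNReal.ofReal_lt_top
  calc ∫⁻ η, ENNReal.ofReal (singleS ⟪ξ, η⟫) ∂σS ≤ ∫⁻ η, 1 + g ⟪ξ, η⟫ ∂σS :=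
        lintegral_mono fun η => hle _
    _ < ⊤ := by
      rw [lintegral_add_left measurable_const, lintegral_const]
      exact ENNReal.add_lt_top.mpr
        ⟨ENNReal.mul_lt_top ENNReal.one_lt_top (measure_lt_top _ _), hg⟩

lemma integrable_singleS_inner_mul {ξ : E3} (hξ : ‖ξ‖ = 1) {F : E3 → ℝ}
    (hF : ContinuousOn F sph) : Integrable (fun η => singleS ⟪ξ, η⟫ * F η) σS := by
  obtain ⟨C, hC⟩ := (isCompact_sphere (0 : E3) 1).exists_bound_of_continuousOn hF
  have hS : Integrable (fun η => singleS ⟪ξ, η⟫) σS :=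
    ⟨(measurable_singleS.comp (by fun_prop)).aestronglyMeasurable,
      (hasFiniteIntegral_iff_ofReal (ae_of_all _ fun η => singleS_nonneg _)).mpr
        (lintegral_singleS_inner_lt_top hξ)⟩
  exact hS.mul_bdd (integrable_σS_of_continuousOn hF).aestronglyMeasurable
    (ae_mem_sph.mono fun η hη => hC η hη)

section RegularizedKernel

variable (Rs : RegSingleC1) {ρ : ℝ}

lemma sregK_eq_of_lt {t : ℝ} (ht : 1 - ρ < t) : SregK Rs ρ t = Rs.R ρ t :=
  if_neg (not_le.mpr ht)

lemma integrable_sregK_inner_mul (hρ : ρ ∈ Ioo (0 : ℝ) 1) {ξ : E3} (hξ : ‖ξ‖ = 1)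
    {F : E3 → ℝ} (hF : ContinuousOn F sph) :
    Integrable (fun η => SregK Rs ρ ⟪ξ, η⟫ * F η) σS := by
  have hR : Integrable (fun η => Rs.R ρ ⟪ξ, η⟫ * F η) σS :=
    integrable_σS_of_continuousOn <| ((Rs.smooth ρ hρ).continuousOn.comp (by fun_prop)
      fun η hη => inner_mem_Icc_of_mem_sph hξ hη).mul hF
  have hpiece : (fun η => SregK Rs ρ ⟪ξ, η⟫ * F η)
      = {η | ⟪ξ, η⟫ ≤ 1 - ρ}.piecewise (fun η => singleS ⟪ξ, η⟫ * F η)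
          (fun η => Rs.R ρ ⟪ξ, η⟫ * F η) := by
    ext η
    by_cases h : ⟪ξ, η⟫ ≤ 1 - ρ <;> simp [SregK, piecewise, h]
  rw [hpiece]
  exact Integrable.piecewise (measurableSet_le (by fun_prop) measurable_const)
    (integrable_singleS_inner_mul hξ hF).integrableOn hR.integrableOn

lemma aemeasurable_sregK (hρ : ρ ∈ Ioo (0 : ℝ) 1) :
    AEMeasurable (SregK Rs ρ) (volume.restrict (Ioc (1 - ρ) 1)) := by
  have hR : ContinuousOn (Rs.R ρ) (Ioc (1 - ρ) 1) :=
    (Rs.smooth ρ hρ).continuousOn.mono fun t ht => ⟨by linarith [ht.1, hρ.2], ht.2⟩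
  exact (hR.aemeasurable measurableSet_Ioc).congr <| (ae_restrict_iff' measurableSet_Ioc).2
    (ae_of_all _ fun t ht => (sregK_eq_of_lt Rs ht.1).symm)

lemma lintegral_sregK_sub_singleS_le (hρ : ρ ∈ Ioo (0 : ℝ) 1) :
    ∫⁻ t in Ioc (1 - ρ) 1, ENNReal.ofReal |SregK Rs ρ t - singleS t|
      ≤ ENNReal.ofReal (∫ t in (1 - ρ)..1, |Rs.R ρ t|) + ENNReal.ofReal (√2 * √ρ) := by
  have hR : IntegrableOn (fun t => |Rs.R ρ t|) (Ioc (1 - ρ) 1) :=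
    ((Rs.smooth ρ hρ).continuousOn.abs.integrableOn_compact isCompact_Icc).mono_set
      fun t ht => ⟨by linarith [ht.1, hρ.2], ht.2⟩
  calc ∫⁻ t in Ioc (1 - ρ) 1, ENNReal.ofReal |SregK Rs ρ t - singleS t|
      ≤ ∫⁻ t in Ioc (1 - ρ) 1, ENNReal.ofReal |Rs.R ρ t| + ENNReal.ofReal (singleS t) :=
        setLIntegral_mono' measurableSet_Ioc fun t ht => by
          rw [sregK_eq_of_lt Rs ht.1, ← ENNReal.ofReal_add (abs_nonneg _) (singleS_nonneg t)]
          exact ENNReal.ofReal_le_ofReal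
            ((abs_sub _ _).trans_eq (by rw [abs_of_nonneg (singleS_nonneg t)]))
    _ = _ := by
      rw [lintegral_add_right _ measurable_singleS.ennreal_ofReal,
        ← ofReal_integral_eq_lintegral_ofReal hR (ae_of_all _ fun _ => abs_nonneg _),
        ← intervalIntegral.integral_of_le (by linarith [hρ.1]), lintegral_singleS_Ioc hρ.1.le]

lemma abs_integral_sregK_sub_integral_singleS_le (hρ : ρ ∈ Ioo (0 : ℝ) 1) {ξ : E3}
    (hξ : ‖ξ‖ = 1) {F : E3 → ℝ} (hF : ContinuousOn F sph) {M : ℝ}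
    (hM : ∀ η ∈ sph, ‖F η‖ ≤ M) :
    |∫ η, SregK Rs ρ ⟪ξ, η⟫ * F η ∂σS - ∫ η, singleS ⟪ξ, η⟫ * F η ∂σS|
      ≤ 2 * π * M * ((∫ t in (1 - ρ)..1, |Rs.R ρ t|) + √2 * √ρ) := by
  have hM0 : 0 ≤ M := (norm_nonneg _).trans (hM ξ (mem_sphere_zero_iff_norm.mpr hξ))
  have hI : 0 ≤ ∫ t in (1 - ρ)..1, |Rs.R ρ t| :=
    intervalIntegral.integral_nonneg (by linarith [hρ.1]) fun _ _ => abs_nonneg _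
  set d : ℝ → ℝ≥0∞ := fun t => ENNReal.ofReal |SregK Rs ρ t - singleS t|
  have hd : ∫⁻ η, d ⟪ξ, η⟫ ∂σS ≤ ENNReal.ofReal (2 * π) *
      (ENNReal.ofReal (∫ t in (1 - ρ)..1, |Rs.R ρ t|) + ENNReal.ofReal (√2 * √ρ)) := by
    have hdm : AEMeasurable d (volume.restrict (Ioc (1 - ρ) 1)) :=
      ((aemeasurable_sregK Rs hρ).sub measurable_singleS.aemeasurable).abs.ennreal_ofReal
    rw [lintegral_comp_inner_σS hξ (sub_pos.mpr hρ.2) hdm fun t ht => by simp [d, SregK, ht]]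
    gcongr
    exact lintegral_sregK_sub_singleS_le Rs hρ
  have hpt : ∀ᵐ η ∂σS, ENNReal.ofReal ‖SregK Rs ρ ⟪ξ, η⟫ * F η - singleS ⟪ξ, η⟫ * F η‖
      ≤ d ⟪ξ, η⟫ * ENNReal.ofReal M := ae_mem_sph.mono fun η hη => by
    rw [← sub_mul, norm_mul, Real.norm_eq_abs, ← ENNReal.ofReal_mul (abs_nonneg _)]
    exact ENNReal.ofReal_le_ofReal (mul_le_mul_of_nonneg_left (hM η hη) (abs_nonneg _))
  rw [← integral_sub (integrable_sregK_inner_mul Rs hρ hξ hF)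
    (integrable_singleS_inner_mul hξ hF), ← Real.norm_eq_abs]
  refine (norm_integral_le_lintegral_norm _).trans
    (ENNReal.toReal_le_of_le_ofReal (by positivity) ?_)
  calc _ ≤ ∫⁻ η, d ⟪ξ, η⟫ * ENNReal.ofReal M ∂σS := lintegral_mono_ae hpt
    _ = (∫⁻ η, d ⟪ξ, η⟫ ∂σS) * ENNReal.ofReal M :=
        lintegral_mul_const' _ _ ENNReal.ofReal_ne_top
    _ ≤ ENNReal.ofReal (2 * π) * (ENNReal.ofReal (∫ t in (1 - ρ)..1, |Rs.R ρ t|) +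
          ENNReal.ofReal (√2 * √ρ)) * ENNReal.ofReal M := by gcongr
    _ = _ := by
      rw [← ENNReal.ofReal_add hI (by positivity), ← ENNReal.ofReal_mul (by positivity),
        ← ENNReal.ofReal_mul (by positivity)]
      ring_nf

end RegularizedKernel

/-- For a C¹-regularized single layer kernel and continuous F : Ω → ℝ,
lim_{ρ→0+} sup_{ξ∈Ω} |∫_Ω S^ρ(ξ·η)F(η) dω(η) − ∫_Ω S(ξ·η)F(η) dω(η)| = 0. -/
theorem reg_single_layer_uniform_convergence (Rs : RegSingleC1) (F : E3 → ℝ)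
    (hF : ContinuousOn F sph) :
    TendstoUniformly
      (fun ρ (ξ : sph) => ∫ η, SregK Rs ρ ⟪(ξ : E3), η⟫ * F η ∂σS)
      (fun ξ : sph => ∫ η, singleS ⟪(ξ : E3), η⟫ * F η ∂σS)
      (nhdsWithin 0 (Set.Ioi 0)) := by
  obtain ⟨M, hM⟩ := (isCompact_sphere (0 : E3) 1).exists_bound_of_continuousOn hF
  have hsqrt : Tendsto (fun ρ : ℝ => √2 * √ρ) (𝓝[>] 0) (𝓝 0) := by
    simpa using ((Real.continuous_sqrt.tendsto 0).const_mul √2).mono_left nhdsWithin_le_nhds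
  have hbound : Tendsto (fun ρ => 2 * π * M * ((∫ t in (1 - ρ)..1, |Rs.R ρ t|) + √2 * √ρ))
      (𝓝[>] 0) (𝓝 0) := by
    simpa using (Rs.lim0.add hsqrt).const_mul (2 * π * M)
  rw [Metric.tendstoUniformly_iff]
  intro ε hε
  filter_upwards [hbound.eventually (gt_mem_nhds hε), Ioo_mem_nhdsGT zero_lt_one]
    with ρ hρε hρ ξ
  rw [dist_comm, Real.dist_eq]
  exact (abs_integral_sregK_sub_integral_singleS_le Rs hρ (mem_sphere_zero_iff_norm.mp ξ.2)
    hF hM).trans_lt hρε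

end
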